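/- Let T > 0 and μ > 0 satisfy 4μT² < π². Let u, v : ℝ → ℝ be Lipschitz continuous functions with u(0) = 0 and v(0) = 0, and write u′ = deriv u and v′ = deriv v (defined almost everywhere). Assume the following four integral identities hold: (a) ∫₀ᵀ u′(t)v′(t) dt + ∫₀ᵀ v′(t)·(v(t) − v(T)) dt = 0; (b) ∫₀ᵀ v′(t)u′(t) dt − μ·∫₀ᵀ u′(t)·(u(t) − u(T)) dt = 0; (c) ∫₀ᵀ u′(t)² dt + ∫₀ᵀ v′(t)·u(t) dt = 0; (d) ∫₀ᵀ v′(t)² dt − μ·∫₀ᵀ u′(t)·v(t) dt = 0. Then u(t) = 0 and v(t) = 0 for all t ∈ [0,T]. -/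

import Mathlib

open MeasureTheory intervalIntegral Filter Topology Set

section Helpers

lemma seq_tendsto_nhdsNE (x : ℝ) :
    Tendsto (fun n : ℕ => x + 1/((n:ℝ)+1)) atTop (𝓝[≠] x) := by
  apply tendsto_nhdsWithin_of_tendsto_nhds_of_eventually_within
  · have h : Tendsto (fun n : ℕ => 1/((n:ℝ)+1)) atTop (𝓝 0) := tendsto_one_div_add_atTop_nhds_zero_nat
    have h2 : Tendsto (fun n : ℕ => x + 1/((n:ℝ)+1)) atTop (𝓝 (x + 0)) :=
      tendsto_const_nhds.add h
    simpa using h2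
  · filter_upwards with n
    have hp : 0 < 1/((n:ℝ)+1) := by positivity
    simp only [Set.mem_compl_iff, Set.mem_singleton_iff]
    intro h
    nlinarith

lemma tendsto_slope_seq {f : ℝ → ℝ} {x d : ℝ} (hf : HasDerivAt f d x) :
    Tendsto (fun n : ℕ => (f (x + 1/((n:ℝ)+1)) - f x) * ((n:ℝ)+1)) atTop (𝓝 d) := by
  have h := (hasDerivAt_iff_tendsto_slope.1 hf).comp (seq_tendsto_nhdsNE x)
  convert h using 2 with n
  have hn : ((n:ℝ)+1) ≠ 0 := by positivity
  simp only [Function.comp, slope_def_field]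
  field_simp
  ring

lemma tendsto_avg_integral {g : ℝ → ℝ} (hcont : Continuous g) (c : ℝ) :
    Tendsto (fun n : ℕ => (∫ x in c..(c + 1/((n:ℝ)+1)), g x) * ((n:ℝ)+1)) atTop (𝓝 (g c)) := by
  have hd : HasDerivAt (fun y => ∫ x in c..y, g x) (g c) c :=
    integral_hasDerivAt_right (hcont.intervalIntegrable _ _)
      (hcont.stronglyMeasurableAtFilter _ _) hcont.continuousAt
  have := tendsto_slope_seq hd
  simpa using this

lemma ftc_lip {g : ℝ → ℝ} {C : ℝ} {a b : ℝ} (hab : a ≤ b)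
    (hcont : Continuous g)
    (hlip : ∀ x y, a ≤ x → x ≤ y → y ≤ b + 1 → |g y - g x| ≤ C * (y - x))
    (hdiff : ∀ᵐ x, DifferentiableAt ℝ g x) :
    ∫ x in a..b, deriv g x = g b - g a := by
  set F : ℕ → ℝ → ℝ := fun n x => (g (x + 1/((n:ℝ)+1)) - g x) * ((n:ℝ)+1) with hF
  have hDCT : Tendsto (fun n => ∫ x in a..b, F n x) atTop (𝓝 (∫ x in a..b, deriv g x)) := by
    apply intervalIntegral.tendsto_integral_filter_of_dominated_convergence (fun _ => C)
    · filter_upwards with n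
      exact (((hcont.comp (continuous_id.add continuous_const)).sub hcont).mul
        continuous_const).aestronglyMeasurable
    · filter_upwards with n
      filter_upwards with x hx
      rw [Set.uIoc_of_le hab] at hx
      have hn : (0:ℝ) < (n:ℝ)+1 := by positivity
      have h1 : 1/((n:ℝ)+1) ≤ 1 := by
        rw [div_le_one hn]; linarith [Nat.cast_nonneg (α := ℝ) n]
      have h2 : |g (x + 1/((n:ℝ)+1)) - g x| ≤ C * (1/((n:ℝ)+1)) := by
        have hp : (0:ℝ) < 1/((n:ℝ)+1) := by positivity
        have := hlip x (x + 1/((n:ℝ)+1)) hx.1.le (by linarith) (by linarith [hx.2])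
        simpa using this
      have : |F n x| = |g (x + 1/((n:ℝ)+1)) - g x| * ((n:ℝ)+1) := by
        rw [hF]; rw [abs_mul, abs_of_pos hn]
      rw [Real.norm_eq_abs, this]
      calc |g (x + 1/((n:ℝ)+1)) - g x| * ((n:ℝ)+1) ≤ (C * (1/((n:ℝ)+1))) * ((n:ℝ)+1) :=
            mul_le_mul_of_nonneg_right h2 hn.le
        _ = C := by field_simp
    · exact intervalIntegrable_const
    · filter_upwards [hdiff] with x hx _
      exact tendsto_slope_seq hx.hasDerivAt
  have hint : ∀ n : ℕ, ∫ x in a..b, F n x =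
      ((∫ x in b..(b + 1/((n:ℝ)+1)), g x) - ∫ x in a..(a + 1/((n:ℝ)+1)), g x) * ((n:ℝ)+1) := by
    intro n
    set h : ℝ := 1/((n:ℝ)+1) with hh
    have hI : ∀ c d : ℝ, IntervalIntegrable g volume c d := fun c d => hcont.intervalIntegrable _ _
    have e1 : ∫ x in a..b, g (x + h) = ∫ x in (a+h)..(b+h), g x :=
      intervalIntegral.integral_comp_add_right g h
    have e2 : ∫ x in a..b, F n x = ((∫ x in a..b, g (x + h)) - ∫ x in a..b, g x) * ((n:ℝ)+1) :=
      calc ∫ x in a..b, F n x = ∫ x in a..b, (g (x + h) - g x) * ((n:ℝ)+1) := rfl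
        _ = (∫ x in a..b, (g (x + h) - g x)) * ((n:ℝ)+1) :=
            intervalIntegral.integral_mul_const _ _
        _ = ((∫ x in a..b, g (x + h)) - ∫ x in a..b, g x) * ((n:ℝ)+1) := by
            rw [intervalIntegral.integral_sub
              ((by fun_prop : Continuous fun x : ℝ => g (x + h)).intervalIntegrable a b) (hI a b)]
    rw [e2, e1]
    congr 1
    have e3 : (∫ x in (a+h)..(b+h), g x) = (∫ x in a..(b+h), g x) - ∫ x in a..(a+h), g x :=
      (intervalIntegral.integral_interval_sub_left (hI a (b+h)) (hI a (a+h))).symm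
    have e4 : (∫ x in a..b, g x) = (∫ x in a..(b+h), g x) - ∫ x in b..(b+h), g x := by
      have := intervalIntegral.integral_interval_sub_left (hI a (b+h)) (hI a b)
      linarith
    rw [e3, e4]; ring
  have hlim : Tendsto (fun n : ℕ =>
      ((∫ x in b..(b + 1/((n:ℝ)+1)), g x) - ∫ x in a..(a + 1/((n:ℝ)+1)), g x) * ((n:ℝ)+1))
      atTop (𝓝 (g b - g a)) := by
    have h1 := tendsto_avg_integral hcont b
    have h2 := tendsto_avg_integral hcont a
    have := h1.sub h2
    convert this using 2 with n
    ring
  have hlim' : Tendsto (fun n => ∫ x in a..b, F n x) atTop (𝓝 (g b - g a)) :=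
    hlim.congr (fun n => (hint n).symm)
  exact tendsto_nhds_unique hDCT hlim'

lemma lip_deriv_abs_le {f : ℝ → ℝ} {L : NNReal} (hf : LipschitzWith L f) (x : ℝ) :
    |deriv f x| ≤ L := by
  by_cases hx : DifferentiableAt ℝ f x
  · have h1 : ‖fderiv ℝ f x‖ ≤ L := norm_fderiv_le_of_lipschitz ℝ hf
    calc |deriv f x| = ‖(fderiv ℝ f x) 1‖ := by rw [fderiv_apply_one_eq_deriv]; exact (Real.norm_eq_abs _).symm
      _ ≤ ‖fderiv ℝ f x‖ * ‖(1:ℝ)‖ := (fderiv ℝ f x).le_opNorm 1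
      _ ≤ L := by simpa using h1
  · rw [deriv_zero_of_not_differentiableAt hx]
    simpa using L.coe_nonneg

lemma II_of_bdd {f : ℝ → ℝ} {a b M : ℝ} (hmeas : Measurable f)
    (hM : ∀ x ∈ Set.uIcc a b, |f x| ≤ M) : IntervalIntegrable f volume a b := by
  apply IntervalIntegrable.mono_fun' (g := fun _ => M) intervalIntegrable_const
    hmeas.aestronglyMeasurable
  filter_upwards [ae_restrict_mem measurableSet_uIoc] with x hx
  exact hM x (Set.uIoc_subset_uIcc hx)

lemma lip_lip_bound {f : ℝ → ℝ} {L : NNReal} (hf : LipschitzWith L f)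
    {x y : ℝ} (hxy : x ≤ y) : |f y - f x| ≤ L * (y - x) := by
  have := hf.dist_le_mul y x
  rw [Real.dist_eq, Real.dist_eq] at this
  calc |f y - f x| ≤ L * |y - x| := this
    _ = L * (y - x) := by rw [abs_of_nonneg (by linarith)]

lemma ftc_lipschitzWith {f : ℝ → ℝ} {L : NNReal} (hf : LipschitzWith L f) {a b : ℝ} (hab : a ≤ b) :
    ∫ x in a..b, deriv f x = f b - f a :=
  ftc_lip hab hf.continuous (fun _ _ _ hxy _ => lip_lip_bound hf hxy) hf.ae_differentiableAt

lemma ftc_mul {f g : ℝ → ℝ} {Lf Lg : NNReal} (hf : LipschitzWith Lf f) (hg : LipschitzWith Lg g)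
    {a b : ℝ} (hab : a ≤ b) :
    ∫ x in a..b, (deriv f x * g x + f x * deriv g x) = f b * g b - f a * g a := by
  obtain ⟨Mf, hMf⟩ := isCompact_Icc.exists_bound_of_continuousOn
    (s := Set.Icc a (b+1)) hf.continuous.continuousOn
  obtain ⟨Mg, hMg⟩ := isCompact_Icc.exists_bound_of_continuousOn
    (s := Set.Icc a (b+1)) hg.continuous.continuousOn
  simp only [Real.norm_eq_abs] at hMf hMg
  have hMf0 : 0 ≤ Mf := le_trans (abs_nonneg _) (hMf a ⟨le_refl a, by linarith⟩)
  have hMg0 : 0 ≤ Mg := le_trans (abs_nonneg _) (hMg a ⟨le_refl a, by linarith⟩)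
  have key : ∫ x in a..b, deriv (fun y => f y * g y) x = f b * g b - f a * g a := by
    apply ftc_lip hab (hf.continuous.mul hg.continuous)
    · intro x y hx hxy hy
      have hxm : x ∈ Set.Icc a (b+1) := ⟨hx, le_trans hxy hy⟩
      have hym : y ∈ Set.Icc a (b+1) := ⟨le_trans hx hxy, hy⟩
      have e : f y * g y - f x * g x = f y * (g y - g x) + g x * (f y - f x) := by ring
      rw [Pi.mul_apply, Pi.mul_apply, e]
      calc |f y * (g y - g x) + g x * (f y - f x)|
          ≤ |f y * (g y - g x)| + |g x * (f y - f x)| := abs_add_le _ _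
        _ = |f y| * |g y - g x| + |g x| * |f y - f x| := by rw [abs_mul, abs_mul]
        _ ≤ Mf * (Lg * (y - x)) + Mg * (Lf * (y - x)) :=
            add_le_add (mul_le_mul (hMf y hym) (lip_lip_bound hg hxy) (abs_nonneg _) hMf0)
              (mul_le_mul (hMg x hxm) (lip_lip_bound hf hxy) (abs_nonneg _) hMg0)
        _ = (Mf * (Lg : ℝ) + Mg * (Lf : ℝ)) * (y - x) := by ring
    · filter_upwards [hf.ae_differentiableAt, hg.ae_differentiableAt] with x h1 h2
      exact h1.mul h2
  rw [← key]
  apply intervalIntegral.integral_congr_ae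
  filter_upwards [hf.ae_differentiableAt, hg.ae_differentiableAt] with x h1 h2 _
  exact ((h1.hasDerivAt.mul h2.hasDerivAt).deriv).symm

lemma cs_interval {f g : ℝ → ℝ} {a b : ℝ} (hab : a ≤ b)
    (hf2 : IntervalIntegrable (fun x => f x ^ 2) volume a b)
    (hg2 : IntervalIntegrable (fun x => g x ^ 2) volume a b)
    (hfg : IntervalIntegrable (fun x => f x * g x) volume a b) :
    (∫ x in a..b, f x * g x) ^ 2 ≤ (∫ x in a..b, f x ^ 2) * (∫ x in a..b, g x ^ 2) := by
  set A := ∫ x in a..b, g x ^ 2 with hA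
  set B := ∫ x in a..b, f x * g x with hB
  set Cc := ∫ x in a..b, f x ^ 2 with hCc
  have hq : ∀ lam : ℝ, 0 ≤ A * (lam * lam) + (2*B) * lam + Cc := by
    intro lam
    have e : ∫ x in a..b, ((g x ^ 2) * (lam*lam) + (f x * g x) * (2*lam) + f x ^ 2)
        = A * (lam*lam) + (2*B)*lam + Cc := by
      rw [intervalIntegral.integral_add (((hg2.mul_const _)).add (hfg.mul_const _)) hf2,
        intervalIntegral.integral_add (hg2.mul_const _) (hfg.mul_const _),
        intervalIntegral.integral_mul_const, intervalIntegral.integral_mul_const]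
      ring
    have e2 : ∫ x in a..b, ((g x ^ 2) * (lam*lam) + (f x * g x) * (2*lam) + f x ^ 2)
        = ∫ x in a..b, (f x + lam * g x)^2 :=
      intervalIntegral.integral_congr (fun x _ => by ring)
    have h0 : 0 ≤ ∫ x in a..b, (f x + lam * g x)^2 :=
      intervalIntegral.integral_nonneg hab (fun x _ => sq_nonneg _)
    linarith [e ▸ (e2 ▸ h0)]
  have hd := discrim_le_zero hq
  rw [discrim] at hd
  nlinarith

lemma II_sq_deriv {f : ℝ → ℝ} {L : NNReal} (hf : LipschitzWith L f) (a b : ℝ) :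
    IntervalIntegrable (fun x => deriv f x ^ 2) volume a b := by
  apply II_of_bdd (M := (L:ℝ)^2) ((measurable_deriv f).pow_const 2)
  intro x _
  rw [abs_of_nonneg (sq_nonneg _), ← sq_abs]
  exact pow_le_pow_left₀ (abs_nonneg _) (lip_deriv_abs_le hf x) 2

lemma II_deriv_mul_cont {f g : ℝ → ℝ} {L : NNReal} (hf : LipschitzWith L f) (hg : Continuous g)
    (a b : ℝ) : IntervalIntegrable (fun x => deriv f x * g x) volume a b := by
  obtain ⟨M, hM⟩ := isCompact_uIcc.exists_bound_of_continuousOn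
    (s := Set.uIcc a b) hg.continuousOn
  simp only [Real.norm_eq_abs] at hM
  have hM0 : 0 ≤ M := le_trans (abs_nonneg _) (hM a Set.left_mem_uIcc)
  apply II_of_bdd (M := (L:ℝ) * M) ((measurable_deriv f).mul hg.measurable)
  intro x hx
  rw [Pi.mul_apply, abs_mul]
  exact mul_le_mul (lip_deriv_abs_le hf x) (hM x hx) (abs_nonneg _) L.coe_nonneg

lemma II_deriv_mul_deriv {f g : ℝ → ℝ} {Lf Lg : NNReal} (hf : LipschitzWith Lf f)
    (hg : LipschitzWith Lg g) (a b : ℝ) :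
    IntervalIntegrable (fun x => deriv f x * deriv g x) volume a b := by
  apply II_of_bdd (M := (Lf:ℝ) * Lg) ((measurable_deriv f).mul (measurable_deriv g))
  intro x _
  rw [Pi.mul_apply, abs_mul]
  exact mul_le_mul (lip_deriv_abs_le hf x) (lip_deriv_abs_le hg x) (abs_nonneg _) Lf.coe_nonneg

lemma II_deriv {f : ℝ → ℝ} {L : NNReal} (hf : LipschitzWith L f) (a b : ℝ) :
    IntervalIntegrable (deriv f) volume a b :=
  II_of_bdd (measurable_deriv f) (fun x _ => lip_deriv_abs_le hf x)

lemma sq_le_len_mul_integral {f : ℝ → ℝ} {L : NNReal} (hf : LipschitzWith L f) {c d : ℝ}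
    (hcd : c ≤ d) : (f d - f c)^2 ≤ (d - c) * ∫ x in c..d, deriv f x ^ 2 := by
  have h1 : f d - f c = ∫ x in c..d, deriv f x := (ftc_lipschitzWith hf hcd).symm
  have cs := cs_interval (f := deriv f) (g := fun _ => (1:ℝ)) hcd (II_sq_deriv hf c d)
    (by simpa using (intervalIntegrable_const : IntervalIntegrable (fun _ : ℝ => (1:ℝ)) volume c d))
    (by simpa using II_deriv hf c d)
  simp only [mul_one, one_pow, intervalIntegral.integral_const, smul_eq_mul] at cs
  rw [h1]
  nlinarith [cs]

end Helpers

set_option maxHeartbeats 1000000 in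
/-- Uniqueness at the discrete level for small `μ`: if `4μT² < π²` and the
Lipschitz functions `u, v` with `u(0) = v(0) = 0` satisfy the four homogeneous
variational identities (a)–(d), then `u ≡ v ≡ 0` on `[0,T]`. -/
theorem uniqueness_small_mu (T μ : ℝ) (hT : 0 < T) (hμ : 0 < μ)
    (hCFL : 4 * μ * T ^ 2 < Real.pi ^ 2)
    (u v : ℝ → ℝ) (Lu Lv : NNReal)
    (hu : LipschitzWith Lu u) (hv : LipschitzWith Lv v)
    (hu0 : u 0 = 0) (hv0 : v 0 = 0)
    (ha : (∫ t in (0:ℝ)..T, deriv u t * deriv v t)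
        + (∫ t in (0:ℝ)..T, deriv v t * (v t - v T)) = 0)
    (hb : (∫ t in (0:ℝ)..T, deriv v t * deriv u t)
        - μ * ∫ t in (0:ℝ)..T, deriv u t * (u t - u T) = 0)
    (hc : (∫ t in (0:ℝ)..T, (deriv u t) ^ 2)
        + (∫ t in (0:ℝ)..T, deriv v t * u t) = 0)
    (hd : (∫ t in (0:ℝ)..T, (deriv v t) ^ 2)
        - μ * ∫ t in (0:ℝ)..T, deriv u t * v t = 0) :
    ∀ t ∈ Set.Icc (0 : ℝ) T, u t = 0 ∧ v t = 0 := by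
  have hT0 : (0:ℝ) ≤ T := hT.le
  -- ∫ f' f = f T ^2 / 2
  have Ivv : ∫ t in (0:ℝ)..T, deriv v t * v t = v T ^ 2 / 2 := by
    have h := ftc_mul hv hv hT0
    have h2 : ∫ t in (0:ℝ)..T, (deriv v t * v t + v t * deriv v t)
        = ∫ t in (0:ℝ)..T, 2 * (deriv v t * v t) :=
      intervalIntegral.integral_congr (fun x _ => by ring)
    rw [h2, intervalIntegral.integral_const_mul, hv0] at h
    ring_nf at h ⊢
    linarith
  have Iuu : ∫ t in (0:ℝ)..T, deriv u t * u t = u T ^ 2 / 2 := by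
    have h := ftc_mul hu hu hT0
    have h2 : ∫ t in (0:ℝ)..T, (deriv u t * u t + u t * deriv u t)
        = ∫ t in (0:ℝ)..T, 2 * (deriv u t * u t) :=
      intervalIntegral.integral_congr (fun x _ => by ring)
    rw [h2, intervalIntegral.integral_const_mul, hu0] at h
    ring_nf at h ⊢
    linarith
  -- (a),(b) rewritten
  have Ea : ∫ t in (0:ℝ)..T, deriv v t * (v t - v T) = - (v T ^ 2 / 2) := by
    have h2 : ∫ t in (0:ℝ)..T, deriv v t * (v t - v T)
        = ∫ t in (0:ℝ)..T, (deriv v t * v t - deriv v t * v T) :=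
      intervalIntegral.integral_congr (fun x _ => by ring)
    rw [h2, intervalIntegral.integral_sub (II_deriv_mul_cont hv hv.continuous 0 T)
      ((II_deriv hv 0 T).mul_const _), intervalIntegral.integral_mul_const,
      ftc_lipschitzWith hv hT0, Ivv, hv0]
    ring
  have Eb : ∫ t in (0:ℝ)..T, deriv u t * (u t - u T) = - (u T ^ 2 / 2) := by
    have h2 : ∫ t in (0:ℝ)..T, deriv u t * (u t - u T)
        = ∫ t in (0:ℝ)..T, (deriv u t * u t - deriv u t * u T) :=
      intervalIntegral.integral_congr (fun x _ => by ring)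
    rw [h2, intervalIntegral.integral_sub (II_deriv_mul_cont hu hu.continuous 0 T)
      ((II_deriv hu 0 T).mul_const _), intervalIntegral.integral_mul_const,
      ftc_lipschitzWith hu hT0, Iuu, hu0]
    ring
  have hvu' : ∫ t in (0:ℝ)..T, deriv v t * deriv u t
      = ∫ t in (0:ℝ)..T, deriv u t * deriv v t :=
    intervalIntegral.integral_congr (fun x _ => mul_comm _ _)
  rw [Ea] at ha
  rw [hvu', Eb] at hb
  -- u T = 0 and v T = 0
  have huT : u T = 0 := by
    have h3 : u T ^ 2 ≤ 0 := by nlinarith [sq_nonneg (v T), sq_nonneg (u T)]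
    exact (pow_eq_zero_iff two_ne_zero).1 (le_antisymm h3 (sq_nonneg _))
  have hvT : v T = 0 := by
    have h3 : v T ^ 2 ≤ 0 := by nlinarith [sq_nonneg (v T), sq_nonneg (u T)]
    exact (pow_eq_zero_iff two_ne_zero).1 (le_antisymm h3 (sq_nonneg _))
  -- mixed integrals
  have hmix : ∫ t in (0:ℝ)..T, deriv v t * u t = - ∫ t in (0:ℝ)..T, deriv u t * v t := by
    have h := ftc_mul hu hv hT0
    rw [hu0, huT] at h
    have h2 : ∫ t in (0:ℝ)..T, (deriv u t * v t + u t * deriv v t)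
        = ∫ t in (0:ℝ)..T, (deriv u t * v t + deriv v t * u t) :=
      intervalIntegral.integral_congr (fun x _ => by ring)
    rw [h2, intervalIntegral.integral_add (II_deriv_mul_cont hu hv.continuous 0 T)
      (II_deriv_mul_cont hv hu.continuous 0 T)] at h
    linarith
  obtain ⟨A, hA⟩ : ∃ A, A = ∫ t in (0:ℝ)..T, deriv u t ^ 2 := ⟨_, rfl⟩
  obtain ⟨B, hB⟩ : ∃ B, B = ∫ t in (0:ℝ)..T, deriv v t ^ 2 := ⟨_, rfl⟩
  rw [← hA] at hc
  rw [← hB] at hd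
  have hA0 : 0 ≤ A := by
    rw [hA]; exact intervalIntegral.integral_nonneg hT0 (fun x _ => sq_nonneg _)
  have hcA : A = ∫ t in (0:ℝ)..T, deriv u t * v t := by
    rw [hmix] at hc; linarith
  have hdB : B = μ * A := by rw [← hcA] at hd; linarith
  -- Poincaré-type bound
  have hsubB : ∀ c d : ℝ, 0 ≤ c → c ≤ d → d ≤ T → (∫ x in c..d, deriv v x ^ 2) ≤ B := by
    intro c d h1 h2 h3
    rw [hB]
    exact intervalIntegral.integral_mono_interval h1 h2 h3
      (ae_of_all _ (fun x => sq_nonneg _)) (II_sq_deriv hv 0 T)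
  have hsubA : ∀ c d : ℝ, 0 ≤ c → c ≤ d → d ≤ T → (∫ x in c..d, deriv u x ^ 2) ≤ A := by
    intro c d h1 h2 h3
    rw [hA]
    exact intervalIntegral.integral_mono_interval h1 h2 h3
      (ae_of_all _ (fun x => sq_nonneg _)) (II_sq_deriv hu 0 T)
  have hvsq_cont : Continuous (fun t : ℝ => v t ^ 2) := hv.continuous.pow 2
  have hV : (∫ t in (0:ℝ)..T, v t ^ 2) ≤ T ^ 2 / 4 * B := by
    have hsplit : ∫ t in (0:ℝ)..T, v t ^ 2
        = (∫ t in (0:ℝ)..(T/2), v t ^ 2) + ∫ t in (T/2)..T, v t ^ 2 :=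
      (intervalIntegral.integral_add_adjacent_intervals
        (hvsq_cont.intervalIntegrable _ _) (hvsq_cont.intervalIntegrable _ _)).symm
    have hleft : (∫ t in (0:ℝ)..(T/2), v t ^ 2) ≤ ∫ t in (0:ℝ)..(T/2), t * B := by
      apply intervalIntegral.integral_mono_on (by linarith)
        (hvsq_cont.intervalIntegrable _ _)
        ((continuous_id.mul continuous_const).intervalIntegrable _ _)
      intro x hx
      have h1 : v x ^ 2 ≤ x * ∫ y in (0:ℝ)..x, deriv v y ^ 2 := by
        have := sq_le_len_mul_integral hv hx.1
        simpa [hv0] using this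
      exact h1.trans (mul_le_mul_of_nonneg_left (hsubB 0 x le_rfl hx.1 (by linarith [hx.2])) hx.1)
    have hright : (∫ t in (T/2)..T, v t ^ 2) ≤ ∫ t in (T/2)..T, (T - t) * B := by
      apply intervalIntegral.integral_mono_on (by linarith)
        (hvsq_cont.intervalIntegrable _ _)
        (((continuous_const.sub continuous_id).mul continuous_const).intervalIntegrable _ _)
      intro x hx
      have h1 : v x ^ 2 ≤ (T - x) * ∫ y in x..T, deriv v y ^ 2 := by
        have := sq_le_len_mul_integral hv hx.2
        rw [hvT] at this
        have e : (0 - v x) ^ 2 = v x ^ 2 := by ring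
        rw [e] at this
        exact this
      exact h1.trans (mul_le_mul_of_nonneg_left
        (hsubB x T (by linarith [hx.1]) hx.2 le_rfl) (by linarith [hx.2]))
    have hlv : ∫ t in (0:ℝ)..(T/2), (t * B) = T ^ 2 / 8 * B := by
      rw [intervalIntegral.integral_mul_const, integral_id]
      ring
    have hrv : ∫ t in (T/2)..T, ((T - t) * B) = T ^ 2 / 8 * B := by
      rw [intervalIntegral.integral_mul_const,
        intervalIntegral.integral_sub (intervalIntegrable_const) intervalIntegrable_id,
        intervalIntegral.integral_const, integral_id]
      simp only [smul_eq_mul]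
      ring
    rw [hsplit]
    rw [hlv] at hleft
    rw [hrv] at hright
    linarith
  -- Cauchy-Schwarz and conclusion A = 0
  have hcs := cs_interval (f := deriv u) (g := v) hT0 (II_sq_deriv hu 0 T)
    (hvsq_cont.intervalIntegrable _ _) (II_deriv_mul_cont hu hv.continuous 0 T)
  rw [← hA, ← hcA] at hcs
  have hA2 : A ^ 2 ≤ A * (T ^ 2 / 4 * (μ * A)) := by
    calc A ^ 2 ≤ A * ∫ t in (0:ℝ)..T, v t ^ 2 := hcs
      _ ≤ A * (T ^ 2 / 4 * B) := mul_le_mul_of_nonneg_left hV hA0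
      _ = A * (T ^ 2 / 4 * (μ * A)) := by rw [hdB]
  have hμT : μ * T ^ 2 < 4 := by
    have hpi := Real.pi_le_four
    have hpi0 := Real.pi_pos
    nlinarith
  have hAz : A = 0 := by
    have h4 : 0 < 4 - μ * T ^ 2 := by linarith
    have h5 : A ^ 2 ≤ 0 := by nlinarith [sq_nonneg A]
    exact (pow_eq_zero_iff two_ne_zero).1 (le_antisymm h5 (sq_nonneg _))
  have hBz : B = 0 := by rw [hdB, hAz, mul_zero]
  -- conclude pointwise
  intro t ht
  constructor
  · have h1 : u t ^ 2 ≤ t * ∫ y in (0:ℝ)..t, deriv u y ^ 2 := by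
      have := sq_le_len_mul_integral hu ht.1
      simpa [hu0] using this
    have h2 : u t ^ 2 ≤ 0 := by
      have h3 := mul_le_mul_of_nonneg_left (hsubA 0 t le_rfl ht.1 ht.2) ht.1
      rw [hAz, mul_zero] at h3
      linarith
    exact (pow_eq_zero_iff two_ne_zero).1 (le_antisymm h2 (sq_nonneg _))
  · have h1 : v t ^ 2 ≤ t * ∫ y in (0:ℝ)..t, deriv v y ^ 2 := by
      have := sq_le_len_mul_integral hv ht.1
      simpa [hv0] using this
    have h2 : v t ^ 2 ≤ 0 := by
      have h3 := mul_le_mul_of_nonneg_left (hsubB 0 t le_rfl ht.1 ht.2) ht.1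
      rw [hBz, mul_zero] at h3
      linarith
    exact (pow_eq_zero_iff two_ne_zero).1 (le_antisymm h2 (sq_nonneg _))
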